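/- arXiv:math/9802054 — 2 statements merged into one kernel-verified Lean document; each statement's English description precedes it below -/
import Mathlib

section
/- Let R be a commutative ℂ-algebra, D a bracket on R, and let s be a k²×k² complex matrix (regarded over R). Suppose A′, A″ ∈ M_k(R) satisfy the Sklyanin bracket relations {A′ ⊗, A′} = [s, A′⊗A′] and {A″ ⊗, A″} = [s, A″⊗A″], and that D(A′_{ij}, A″_{pq}) = 0 for all indices. Then the product A := A′·A″ also satisfies {A ⊗, A} = [s, A⊗A]. In particular, matrix multiplication is a Poisson map for the Sklyanin (Poisson–Lie) bracket on GL_k. -/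
open Matrix Kronecker BigOperators

/-- A bracket on a commutative `ℂ`-algebra `R`: an antisymmetric `ℂ`-bilinear map
`D : R × R → R` that is a derivation in each argument. -/
structure IsBracket (R : Type*) [CommRing R] [Algebra ℂ R] (D : R → R → R) : Prop where
  add_left : ∀ f g h : R, D (f + g) h = D f h + D g h
  smul_left : ∀ (a : ℂ) (f h : R), D (a • f) h = a • D f h
  antisymm : ∀ f g : R, D f g = -D g f
  leibniz : ∀ f g h : R, D (f * g) h = f * D g h + g * D f h

/-- The bracket matrix `{X ⊗, Y}` with entries `{X ⊗, Y}_{(i,p),(j,q)} = D (X i j) (Y p q)`. -/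
def bmat {R : Type*} [CommRing R] {k : ℕ} (D : R → R → R)
    (X Y : Matrix (Fin k) (Fin k) R) : Matrix (Fin k × Fin k) (Fin k × Fin k) R :=
  Matrix.of fun a b => D (X a.1 b.1) (Y a.2 b.2)

section aux
variable {R : Type*} [CommRing R] [Algebra ℂ R] {D : R → R → R}

lemma D_zero_left (hD : IsBracket R D) (h : R) : D 0 h = 0 := by
  have := hD.smul_left 0 0 h
  simpa using this

lemma D_zero_right (hD : IsBracket R D) (f : R) : D f 0 = 0 := by
  rw [hD.antisymm, D_zero_left hD, neg_zero]

lemma D_sum_left (hD : IsBracket R D) {ι : Type*} (t : Finset ι) (f : ι → R) (h : R) :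
    D (∑ i ∈ t, f i) h = ∑ i ∈ t, D (f i) h := by
  classical
  induction t using Finset.induction_on with
  | empty => simpa using D_zero_left hD h
  | insert _ _ hx ih => rw [Finset.sum_insert hx, Finset.sum_insert hx, hD.add_left, ih]

lemma D_sum_right (hD : IsBracket R D) {ι : Type*} (t : Finset ι) (f : ι → R) (h : R) :
    D h (∑ i ∈ t, f i) = ∑ i ∈ t, D h (f i) := by
  rw [hD.antisymm, D_sum_left hD, ← Finset.sum_neg_distrib]
  exact Finset.sum_congr rfl fun i _ => (hD.antisymm h (f i)).symm

lemma D_leibniz_right (hD : IsBracket R D) (f g h : R) : D f (g * h) = g * D f h + h * D f g := by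
  rw [hD.antisymm, hD.leibniz, neg_add, ← mul_neg, ← mul_neg,
    ← hD.antisymm, ← hD.antisymm]

end aux

/-- If `A'` and `A''` each satisfy the Sklyanin bracket relation `{A ⊗, A} = [s, A ⊗ A]`
and have mutually vanishing brackets, then their product `A = A' * A''` also satisfies the
Sklyanin relation: matrix multiplication is a Poisson map for the Sklyanin bracket. -/
theorem sklyanin_bracket_multiplicative (k : ℕ) (R : Type*) [CommRing R] [Algebra ℂ R]
    (D : R → R → R) (hD : IsBracket R D)
    (s : Matrix (Fin k × Fin k) (Fin k × Fin k) ℂ)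
    (A' A'' : Matrix (Fin k) (Fin k) R)
    (hA' : bmat D A' A'
      = s.map (algebraMap ℂ R) * (A' ⊗ₖ A') - (A' ⊗ₖ A') * s.map (algebraMap ℂ R))
    (hA'' : bmat D A'' A''
      = s.map (algebraMap ℂ R) * (A'' ⊗ₖ A'') - (A'' ⊗ₖ A'') * s.map (algebraMap ℂ R))
    (hcross : ∀ i j p q : Fin k, D (A' i j) (A'' p q) = 0) :
    bmat D (A' * A'') (A' * A'')
      = s.map (algebraMap ℂ R) * ((A' * A'') ⊗ₖ (A' * A''))
        - ((A' * A'') ⊗ₖ (A' * A'')) * s.map (algebraMap ℂ R) := by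
  have hcross' : ∀ i j p q : Fin k, D (A'' i j) (A' p q) = 0 := fun i j p q => by
    rw [hD.antisymm, hcross, neg_zero]
  have key : bmat D (A' * A'') (A' * A'')
      = (A' ⊗ₖ A') * bmat D A'' A'' + bmat D A' A' * (A'' ⊗ₖ A'') := by
    ext ⟨i, p⟩ ⟨j, q⟩
    simp only [bmat, Matrix.of_apply, Matrix.mul_apply, Matrix.add_apply,
      Matrix.kroneckerMap_apply, Fintype.sum_prod_type]
    rw [D_sum_left hD]
    rw [← Finset.sum_add_distrib]
    refine Finset.sum_congr rfl fun m _ => ?_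
    rw [D_sum_right hD, ← Finset.sum_add_distrib]
    refine Finset.sum_congr rfl fun n _ => ?_
    rw [hD.leibniz, D_leibniz_right hD, D_leibniz_right hD]
    simp only [hcross, hcross']
    ring
  rw [key, hA', hA'', Matrix.mul_kronecker_mul]
  noncomm_ring
end

section
/- Let n ≥ 1 and let K := FractionRing (MvPolynomial σ ℂ) be the field of rational functions over ℂ in the 2n+1 variables x, λ_1, …, λ_n, q_1, …, q_n. Then there exists a bracket D on K satisfying the Jacobi identity D(f, D(g,h)) + D(g, D(h,f)) + D(h, D(f,g)) = 0 for all f, g, h ∈ K, such that D(x, f) = 0 for all f, D(λ_i, λ_j) = 0, D(λ_i, q_j) = δ_{ij} λ_i q_j, and for i ≠ j, D(q_i, q_j) = q_i q_j λ_i λ_j (λ_i + λ_j) / ((λ_i − xλ_j)(λ_j − xλ_i)(λ_i − λ_j)). -/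
open BigOperators

/-- The field of rational functions over `ℂ` in the `2n+1` variables
`x, λ_1, …, λ_n, q_1, …, q_n`. -/
abbrev RatFd (n : ℕ) := FractionRing (MvPolynomial (Unit ⊕ Fin n ⊕ Fin n) ℂ)

/-- The variable `x` in `RatFd n`. -/
noncomputable def xVar (n : ℕ) : RatFd n :=
  algebraMap (MvPolynomial (Unit ⊕ Fin n ⊕ Fin n) ℂ) (RatFd n)
    (MvPolynomial.X (Sum.inl ()))

/-- The variable `λ_i` in `RatFd n`. -/
noncomputable def lVar (n : ℕ) (i : Fin n) : RatFd n :=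
  algebraMap (MvPolynomial (Unit ⊕ Fin n ⊕ Fin n) ℂ) (RatFd n)
    (MvPolynomial.X (Sum.inr (Sum.inl i)))

/-- The variable `q_i` in `RatFd n`. -/
noncomputable def qVar (n : ℕ) (i : Fin n) : RatFd n :=
  algebraMap (MvPolynomial (Unit ⊕ Fin n ⊕ Fin n) ℂ) (RatFd n)
    (MvPolynomial.X (Sum.inr (Sum.inr i)))



open MvPolynomial

set_option synthInstance.maxHeartbeats 1000000
set_option maxHeartbeats 2000000

noncomputable section

abbrev Pn (σ : Type*) := MvPolynomial σ ℂ
abbrev Kn (σ : Type*) := FractionRing (Pn σ)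

variable {σ : Type*}

def aM (σ : Type*) : Pn σ →+* Kn σ := algebraMap _ _

lemma aM_inj : Function.Injective (aM σ) := IsFractionRing.injective _ _

lemma exists_rep (z : Kn σ) : ∃ ps : Pn σ × Pn σ, ps.2 ≠ 0 ∧ z * aM σ ps.2 = aM σ ps.1 := by
  obtain ⟨⟨p, s⟩, h⟩ := IsLocalization.surj (nonZeroDivisors (Pn σ)) z
  exact ⟨⟨p, s⟩, nonZeroDivisors.ne_zero s.2, h⟩

def pd (a : σ) (z : Kn σ) : Kn σ :=
  let ps := Classical.choose (exists_rep z)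
  (aM σ (pderiv a ps.1) - z * aM σ (pderiv a ps.2)) / aM σ ps.2

lemma aM_ne_zero {p : Pn σ} (h : p ≠ 0) : aM σ p ≠ 0 := fun h0 => h (aM_inj (by simpa using h0))

lemma pd_spec (a : σ) (z : Kn σ) {p s : Pn σ} (hs : s ≠ 0) (hz : z * aM σ s = aM σ p) :
    pd a z = (aM σ (pderiv a p) - z * aM σ (pderiv a s)) / aM σ s := by
  obtain ⟨hs0, hz0⟩ := Classical.choose_spec (exists_rep z)
  set ps := Classical.choose (exists_rep z)
  have hcross : p * ps.2 = ps.1 * s := by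
    apply aM_inj
    rw [map_mul, map_mul, ← hz, ← hz0]; ring
  have hd := congrArg (fun q => aM σ (pderiv a q)) hcross
  simp only [pderiv_mul, map_add, map_mul] at hd
  have hS : aM σ s ≠ 0 := aM_ne_zero hs
  have hS0 : aM σ ps.2 ≠ 0 := aM_ne_zero hs0
  show (aM σ (pderiv a ps.1) - z * aM σ (pderiv a ps.2)) / aM σ ps.2 = _
  rw [div_eq_div_iff hS0 hS]
  linear_combination (-1 : Kn σ) * hd - aM σ (pderiv a ps.2) * hz + aM σ (pderiv a s) * hz0


lemma pd_algebraMap (a : σ) (p : Pn σ) : pd a (aM σ p) = aM σ (pderiv a p) := by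
  have h1 : aM σ p * aM σ 1 = aM σ p := by simp
  rw [pd_spec a _ one_ne_zero h1]
  simp

lemma pd_X [DecidableEq σ] (a b : σ) : pd a (aM σ (X b)) = if a = b then 1 else 0 := by
  rw [pd_algebraMap]
  rcases eq_or_ne a b with rfl | h
  · simp [pderiv_X_self]
  · simp [pderiv_X_of_ne h, h]

lemma pd_add (a : σ) (z w : Kn σ) : pd a (z + w) = pd a z + pd a w := by
  obtain ⟨⟨p, s⟩, hs, hz⟩ := exists_rep z
  obtain ⟨⟨q, t⟩, ht, hw⟩ := exists_rep w
  simp only at hs hz ht hw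
  have hst : s * t ≠ 0 := mul_ne_zero hs ht
  have hzw : (z + w) * aM σ (s * t) = aM σ (p * t + q * s) := by
    rw [map_mul, map_add, map_mul, map_mul, ← hz, ← hw]; ring
  rw [pd_spec a _ hs hz, pd_spec a _ ht hw, pd_spec a _ hst hzw]
  have hS : aM σ s ≠ 0 := aM_ne_zero hs
  have hT : aM σ t ≠ 0 := aM_ne_zero ht
  simp only [map_add, pderiv_mul, map_mul]
  rw [div_add_div _ _ hS hT, div_eq_div_iff (mul_ne_zero hS hT) (mul_ne_zero hS hT)]
  linear_combination (-(aM σ s * aM σ t)) *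
      (aM σ (pderiv a t) * hz + aM σ (pderiv a s) * hw)

lemma pd_mul (a : σ) (z w : Kn σ) : pd a (z * w) = z * pd a w + w * pd a z := by
  obtain ⟨⟨p, s⟩, hs, hz⟩ := exists_rep z
  obtain ⟨⟨q, t⟩, ht, hw⟩ := exists_rep w
  simp only at hs hz ht hw
  have hst : s * t ≠ 0 := mul_ne_zero hs ht
  have hzw : (z * w) * aM σ (s * t) = aM σ (p * q) := by
    rw [map_mul, map_mul, ← hz, ← hw]; ring
  rw [pd_spec a _ hs hz, pd_spec a _ ht hw, pd_spec a _ hst hzw]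
  have hS : aM σ s ≠ 0 := aM_ne_zero hs
  have hT : aM σ t ≠ 0 := aM_ne_zero ht
  simp only [map_add, pderiv_mul, map_mul]
  rw [mul_div_assoc', mul_div_assoc', div_add_div _ _ hT hS,
    div_eq_div_iff (mul_ne_zero hS hT) (mul_ne_zero hT hS)]
  linear_combination (-(aM σ s * aM σ t)) *
      (aM σ (pderiv a p) * hw + aM σ (pderiv a q) * hz)


lemma algebraMapC_eq (c : ℂ) : algebraMap ℂ (Kn σ) c = aM σ (C c) := by
  rw [IsScalarTower.algebraMap_apply ℂ (Pn σ) (Kn σ)]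
  rfl

lemma pd_C (a : σ) (c : ℂ) : pd a (algebraMap ℂ (Kn σ) c) = 0 := by
  rw [algebraMapC_eq, pd_algebraMap, pderiv_C, map_zero]

lemma pd_one (a : σ) : pd a (1 : Kn σ) = 0 := by
  have := pd_C a 1; simpa using this

lemma pd_zero (a : σ) : pd a (0 : Kn σ) = 0 := by
  have := pd_C a 0; simpa using this

lemma pd_smul (a : σ) (c : ℂ) (z : Kn σ) : pd a (c • z) = c • pd a z := by
  rw [Algebra.smul_def (A := Kn σ), pd_mul, pd_C a c, Algebra.smul_def (A := Kn σ)]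
  ring

lemma pd_neg (a : σ) (z : Kn σ) : pd a (-z) = -pd a z := by
  have h := pd_add a z (-z)
  rw [add_neg_cancel, pd_zero] at h
  linear_combination -h

lemma pd_sub (a : σ) (z w : Kn σ) : pd a (z - w) = pd a z - pd a w := by
  rw [sub_eq_add_neg, pd_add, pd_neg, sub_eq_add_neg]

lemma pd_div_zero (a : σ) {u v : Kn σ} (hv : v ≠ 0) (hu : pd a u = 0) (hv' : pd a v = 0) :
    pd a (u / v) = 0 := by
  have h := pd_mul a (u / v) v
  rw [div_mul_cancel₀ u hv, hu, hv', mul_zero, zero_add] at h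
  rcases mul_eq_zero.mp h.symm with h' | h'
  · exact absurd h' hv
  · exact h'


lemma derivation_ext {d : Kn σ → Kn σ}
    (hadd : ∀ u v, d (u + v) = d u + d v)
    (hmul : ∀ u v, d (u * v) = u * d v + v * d u)
    (hC : ∀ c : ℂ, d (algebraMap ℂ (Kn σ) c) = 0)
    (hX : ∀ s, d (aM σ (X s)) = 0) : ∀ z, d z = 0 := by
  have hP : ∀ p : Pn σ, d (aM σ p) = 0 := by
    intro p
    induction p using MvPolynomial.induction_on with
    | C c => rw [← algebraMapC_eq]; exact hC c
    | add p q hp hq => rw [map_add, hadd, hp, hq, add_zero]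
    | mul_X p i hp => rw [map_mul, hmul, hp, hX, mul_zero, mul_zero, add_zero]
  intro z
  obtain ⟨⟨p, s⟩, hs, hz⟩ := exists_rep z
  simp only at hs hz
  have h := hmul z (aM σ s)
  rw [hz, hP, hP, mul_zero, zero_add] at h
  rcases mul_eq_zero.mp h.symm with h' | h'
  · exact absurd h' (aM_ne_zero hs)
  · exact h'


abbrev σn (n : ℕ) := Unit ⊕ Fin n ⊕ Fin n

variable {n : ℕ}

abbrev Vx (n : ℕ) : σn n := Sum.inl ()
abbrev Vl (i : Fin n) : σn n := Sum.inr (Sum.inl i)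
abbrev Vq (i : Fin n) : σn n := Sum.inr (Sum.inr i)

def Lv (i : Fin n) : Kn (σn n) := aM _ (X (Vl i))
def Qv (i : Fin n) : Kn (σn n) := aM _ (X (Vq i))
def Xv (n : ℕ) : Kn (σn n) := aM _ (X (Vx n))

@[simp] lemma pd_l_l (m i : Fin n) : pd (Vl m) (Lv i) = if m = i then 1 else 0 := by
  rw [Lv, pd_X]; simp [Vl]
@[simp] lemma pd_q_q (m i : Fin n) : pd (Vq m) (Qv i) = if m = i then 1 else 0 := by
  rw [Qv, pd_X]; simp [Vq]
@[simp] lemma pd_l_q (m i : Fin n) : pd (Vl m) (Qv i) = 0 := by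
  rw [Qv, pd_X]; simp [Vl, Vq]
@[simp] lemma pd_q_l (m i : Fin n) : pd (Vq m) (Lv i) = 0 := by
  rw [Lv, pd_X]; simp [Vl, Vq]
@[simp] lemma pd_l_x (m : Fin n) : pd (Vl m) (Xv n) = 0 := by
  rw [Xv, pd_X]; simp [Vl, Vx]
@[simp] lemma pd_q_x (m : Fin n) : pd (Vq m) (Xv n) = 0 := by
  rw [Xv, pd_X]; simp [Vq, Vx]

lemma lx_ne (i j : Fin n) : Lv i - Xv n * Lv j ≠ 0 := by
  intro h0
  have hp : (X (Vl i) - X (Vx n) * X (Vl j) : Pn (σn n)) = 0 := by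
    apply aM_inj
    rw [map_sub, map_mul, map_zero]
    exact h0
  have := congrArg (MvPolynomial.eval (fun s => if s = Vl i then (1 : ℂ) else 0)) hp
  simp [Vl, Vx] at this

lemma ll_ne {i j : Fin n} (h : i ≠ j) : Lv i - Lv j ≠ 0 := by
  intro h0
  have hp : (X (Vl i) - X (Vl j) : Pn (σn n)) = 0 := by
    apply aM_inj
    rw [map_sub, map_zero]
    exact h0
  have := congrArg (MvPolynomial.eval (fun s => if s = Vl i then (1 : ℂ) else 0)) hp
  simp [Vl, Sum.inr.injEq, Sum.inl.injEq, h.symm] at this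


def Hv (i j : Fin n) : Kn (σn n) :=
  (Lv i * Lv j * (Lv i + Lv j)) /
    ((Lv i - Xv n * Lv j) * (Lv j - Xv n * Lv i) * (Lv i - Lv j))

lemma Hv_antisymm {i j : Fin n} (h : i ≠ j) : Hv j i = -Hv i j := by
  rw [Hv, Hv,
    show Lv j * Lv i * (Lv j + Lv i) = Lv i * Lv j * (Lv i + Lv j) by ring,
    show (Lv j - Xv n * Lv i) * (Lv i - Xv n * Lv j) * (Lv j - Lv i)
      = -((Lv i - Xv n * Lv j) * (Lv j - Xv n * Lv i) * (Lv i - Lv j)) by ring]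
  exact div_neg (R := Kn (σn n)) _

lemma Hden_ne {i j : Fin n} (h : i ≠ j) :
    (Lv i - Xv n * Lv j) * (Lv j - Xv n * Lv i) * (Lv i - Lv j) ≠ (0 : Kn (σn n)) :=
  mul_ne_zero (mul_ne_zero (lx_ne i j) (lx_ne j i)) (ll_ne h)

lemma pd_q_H (m : Fin n) {i j : Fin n} (h : i ≠ j) : pd (Vq m) (Hv i j) = 0 := by
  rw [Hv]
  apply pd_div_zero _ (Hden_ne h) <;>
    simp [pd_mul, pd_add, pd_sub]

lemma pd_l_H {m i j : Fin n} (h : i ≠ j) (hmi : m ≠ i) (hmj : m ≠ j) :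
    pd (Vl m) (Hv i j) = 0 := by
  rw [Hv]
  apply pd_div_zero _ (Hden_ne h) <;>
    simp [pd_mul, pd_add, pd_sub, hmi, hmj]

def cMat (n : ℕ) : σn n → σn n → Kn (σn n)
  | Sum.inr (Sum.inl i), Sum.inr (Sum.inr j) => if i = j then Lv i * Qv i else 0
  | Sum.inr (Sum.inr i), Sum.inr (Sum.inl j) => if j = i then -(Lv j * Qv j) else 0
  | Sum.inr (Sum.inr i), Sum.inr (Sum.inr j) => if i = j then 0 else Qv i * Qv j * Hv i j
  | _, _ => 0

@[simp] lemma cMat_lq (i j : Fin n) :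
    cMat n (Vl i) (Vq j) = if i = j then Lv i * Qv i else 0 := rfl
@[simp] lemma cMat_ql (i j : Fin n) :
    cMat n (Vq i) (Vl j) = if j = i then -(Lv j * Qv j) else 0 := rfl
@[simp] lemma cMat_qq (i j : Fin n) :
    cMat n (Vq i) (Vq j) = if i = j then 0 else Qv i * Qv j * Hv i j := rfl
@[simp] lemma cMat_ll (i j : Fin n) : cMat n (Vl i) (Vl j) = 0 := rfl
@[simp] lemma cMat_xa (u : Unit) (b : σn n) : cMat n (Sum.inl u) b = 0 := by
  rcases b with v | j | j <;> rfl
@[simp] lemma cMat_lx (i : Fin n) (u : Unit) : cMat n (Vl i) (Sum.inl u) = 0 := rfl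
@[simp] lemma cMat_qx (i : Fin n) (u : Unit) : cMat n (Vq i) (Sum.inl u) = 0 := rfl

lemma cMat_antisymm (a b : σn n) : cMat n b a = -cMat n a b := by
  have hq : ∀ i j : Fin n, cMat n (Vq j) (Vq i) = -cMat n (Vq i) (Vq j) := by
    intro i j
    rcases eq_or_ne i j with rfl | hh
    · simp
    · simp only [cMat_qq, if_neg hh, if_neg (Ne.symm hh)]
      rw [Hv_antisymm hh]
      ring
  have hlq : ∀ i j : Fin n, cMat n (Vq j) (Vl i) = -cMat n (Vl i) (Vq j) := by
    intro i j
    simp only [cMat_ql, cMat_lq]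
    rcases eq_or_ne i j with rfl | hh
    · simp
    · simp [hh, Ne.symm hh]
  rcases a with u | i | i <;> rcases b with v | j | j <;>
    try simp only [cMat_xa, cMat_lx, cMat_qx, cMat_ll, neg_zero, neg_neg]
  all_goals try exact hlq i j
  all_goals try (rw [hlq j i, neg_neg])
  all_goals exact hq i j

def Dbr (n : ℕ) (f g : Kn (σn n)) : Kn (σn n) :=
  ∑ a : σn n, ∑ b : σn n, cMat n a b * pd a f * pd b g


lemma Dbr_add_left (f g h : Kn (σn n)) : Dbr n (f + g) h = Dbr n f h + Dbr n g h := by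
  simp only [Dbr, pd_add, add_mul, mul_add, Finset.sum_add_distrib]

lemma Dbr_C_left (c : ℂ) (f : Kn (σn n)) : Dbr n (algebraMap ℂ _ c) f = 0 := by
  simp [Dbr, pd_C]

lemma Dbr_antisymm (f g : Kn (σn n)) : Dbr n f g = -Dbr n g f := by
  rw [Dbr, Dbr, Finset.sum_comm, ← Finset.sum_neg_distrib]
  congr 1; funext a; rw [← Finset.sum_neg_distrib]; congr 1; funext b
  rw [cMat_antisymm a b]
  ring

lemma Dbr_leibniz (f g h : Kn (σn n)) : Dbr n (f * g) h = f * Dbr n g h + g * Dbr n f h := by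
  simp only [Dbr, pd_mul]
  rw [Finset.mul_sum, Finset.mul_sum, ← Finset.sum_add_distrib]
  refine Finset.sum_congr rfl fun a _ => ?_
  rw [Finset.mul_sum, Finset.mul_sum, ← Finset.sum_add_distrib]
  refine Finset.sum_congr rfl fun b _ => ?_
  ring

lemma Dbr_smul_left (c : ℂ) (f h : Kn (σn n)) : Dbr n (c • f) h = c • Dbr n f h := by
  rw [Algebra.smul_def (A := Kn (σn n)), Algebra.smul_def (A := Kn (σn n)),
    Dbr_leibniz, Dbr_C_left]
  ring

lemma Dbr_add_right (f g h : Kn (σn n)) : Dbr n f (g + h) = Dbr n f g + Dbr n f h := by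
  rw [Dbr_antisymm, Dbr_add_left, Dbr_antisymm g f, Dbr_antisymm h f]; ring

lemma Dbr_zero_left (f : Kn (σn n)) : Dbr n 0 f = 0 := by
  have := Dbr_add_left 0 0 f
  rw [add_zero] at this
  linear_combination -this

lemma Dbr_zero_right (f : Kn (σn n)) : Dbr n f 0 = 0 := by
  rw [Dbr_antisymm, Dbr_zero_left, neg_zero]

lemma Dbr_neg_right (f g : Kn (σn n)) : Dbr n f (-g) = -Dbr n f g := by
  have := Dbr_add_right f g (-g)
  rw [add_neg_cancel, Dbr_zero_right] at this
  linear_combination -this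

lemma Dbr_leibniz_right (f g h : Kn (σn n)) :
    Dbr n f (g * h) = g * Dbr n f h + h * Dbr n f g := by
  rw [Dbr_antisymm, Dbr_leibniz, Dbr_antisymm g f, Dbr_antisymm h f]; ring

lemma Dbr_self (f : Kn (σn n)) : Dbr n f f = 0 := by
  have h := Dbr_antisymm f f
  have h2 : (2 : Kn (σn n)) * Dbr n f f = 0 := by linear_combination h
  rcases mul_eq_zero.mp h2 with h' | h'
  · exact absurd h' two_ne_zero
  · exact h'

lemma Dbr_X_left (s : σn n) (f : Kn (σn n)) :
    Dbr n (aM _ (X s)) f = ∑ b : σn n, cMat n s b * pd b f := by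
  rw [Dbr]
  rw [Finset.sum_eq_single s]
  · rw [← Finset.sum_congr rfl]
    intro b _
    rw [pd_X]
    simp
  · intro a _ ha
    apply Finset.sum_eq_zero
    intro b _
    rw [pd_X, if_neg ha]
    ring
  · intro h; exact absurd (Finset.mem_univ s) h


lemma sum_sigma (F : σn n → Kn (σn n)) :
    ∑ b : σn n, F b = F (Vx n) + ((∑ i, F (Vl i)) + ∑ i, F (Vq i)) := by
  rw [Fintype.sum_sum_type]
  congr 1
  · simp [Vx]
  · rw [Fintype.sum_sum_type]

lemma Dl_apply (i : Fin n) (f : Kn (σn n)) :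
    Dbr n (Lv i) f = Lv i * Qv i * pd (Vq i) f := by
  rw [Lv, Dbr_X_left, sum_sigma]
  simp only [cMat_lq, cMat_ll, cMat_lx, zero_mul, Finset.sum_const_zero, zero_add, add_zero,
    ite_mul]
  rw [Finset.sum_ite_eq (Finset.univ) i (fun j => Lv i * Qv i * pd (Vq j) f)]
  simp [Lv]

lemma Dq_apply (i : Fin n) (f : Kn (σn n)) :
    Dbr n (Qv i) f = -(Lv i * Qv i) * pd (Vl i) f
      + ∑ j, (if i = j then 0 else Qv i * Qv j * Hv i j) * pd (Vq j) f := by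
  rw [Qv, Dbr_X_left, sum_sigma]
  simp only [cMat_ql, cMat_qq, cMat_qx, zero_mul, Finset.sum_const_zero, zero_add, ite_mul]
  congr 1
  rw [Finset.sum_ite_eq' (Finset.univ) i (fun j => -(Lv j * Qv j) * pd (Vl j) f)]
  simp [Qv]

lemma Dx_left (f : Kn (σn n)) : Dbr n (Xv n) f = 0 := by
  rw [Xv, Dbr_X_left]
  simp [Vx]


lemma Dll (i j : Fin n) : Dbr n (Lv i) (Lv j) = 0 := by
  rw [Dl_apply]; simp

lemma Dlq (i j : Fin n) : Dbr n (Lv i) (Qv j) = if i = j then Lv i * Qv j else 0 := by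
  rw [Dl_apply, pd_q_q]
  rcases eq_or_ne i j with rfl | h
  · simp
  · simp [h]

lemma Dqq {i j : Fin n} (h : i ≠ j) : Dbr n (Qv i) (Qv j) = Qv i * Qv j * Hv i j := by
  rw [Dq_apply, pd_l_q,
    show (∑ m, (if i = m then 0 else Qv i * Qv m * Hv i m) * pd (Vq m) (Qv j))
      = ∑ m, (if m = j then (if i = m then 0 else Qv i * Qv m * Hv i m) else 0) from
    Finset.sum_congr rfl fun m _ => by rw [pd_q_q]; split <;> simp,
    Finset.sum_ite_eq' Finset.univ j]
  simp [h]

lemma DlH (i : Fin n) {j k : Fin n} (hjk : j ≠ k) : Dbr n (Lv i) (Hv j k) = 0 := by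
  rw [Dl_apply, pd_q_H _ hjk, mul_zero]

lemma DqH {i j k : Fin n} (hjk : j ≠ k) (hij : i ≠ j) (hik : i ≠ k) :
    Dbr n (Qv i) (Hv j k) = 0 := by
  rw [Dq_apply, pd_l_H hjk hij hik,
    Finset.sum_eq_zero fun m _ => by rw [pd_q_H m hjk, mul_zero]]
  ring

def Jac (n : ℕ) (f g h : Kn (σn n)) : Kn (σn n) :=
  Dbr n f (Dbr n g h) + Dbr n g (Dbr n h f) + Dbr n h (Dbr n f g)

lemma Jac_cyc (f g h : Kn (σn n)) : Jac n f g h = Jac n g h f := by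
  rw [Jac, Jac]; ring

lemma Jac_swap (f g h : Kn (σn n)) : Jac n g f h = -Jac n f g h := by
  rw [Jac, Jac, Dbr_antisymm f h, Dbr_antisymm h g, Dbr_antisymm g f,
    Dbr_neg_right, Dbr_neg_right, Dbr_neg_right]
  ring

lemma Jac_add1 (f1 f2 g h : Kn (σn n)) :
    Jac n (f1 + f2) g h = Jac n f1 g h + Jac n f2 g h := by
  simp only [Jac, Dbr_add_left, Dbr_add_right]
  ring

lemma Jac_mul1 (f1 f2 g h : Kn (σn n)) :
    Jac n (f1 * f2) g h = f1 * Jac n f2 g h + f2 * Jac n f1 g h := by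
  simp only [Jac, Dbr_leibniz, Dbr_leibniz_right, Dbr_add_right]
  simp only [Dbr_antisymm f2 g, Dbr_antisymm f1 g, Dbr_neg_right]
  ring

lemma Jac_C1 (c : ℂ) (g h : Kn (σn n)) : Jac n (algebraMap ℂ _ c) g h = 0 := by
  rw [Jac, Dbr_C_left, Dbr_antisymm h _, Dbr_C_left, neg_zero, Dbr_zero_right,
    Dbr_C_left, Dbr_zero_right]
  ring


lemma Dql (k i : Fin n) :
    Dbr n (Qv k) (Lv i) = if i = k then -(Lv i * Qv k) else 0 := by
  rw [Dbr_antisymm, Dlq]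
  split <;> simp

lemma Jac_swap23 (f g h : Kn (σn n)) : Jac n f h g = -Jac n f g h := by
  rw [Jac_cyc f h g, Jac_swap g h f, ← Jac_cyc f g h]

lemma JX1 (g h : Kn (σn n)) : Jac n (Xv n) g h = 0 := by
  rw [Jac, Dx_left, Dbr_antisymm h (Xv n), Dx_left, neg_zero, Dbr_zero_right, Dx_left,
    Dbr_zero_right]
  ring

lemma J1 (i j k : Fin n) : Jac n (Lv i) (Lv j) (Lv k) = 0 := by
  rw [Jac, Dll, Dll, Dll, Dbr_zero_right, Dbr_zero_right, Dbr_zero_right]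
  ring

lemma J2 (i j k : Fin n) : Jac n (Lv i) (Lv j) (Qv k) = 0 := by
  rw [Jac, Dll, Dbr_zero_right, Dlq, Dql]
  rcases eq_or_ne j k with rfl | hjk
  · rw [if_pos rfl]
    rcases eq_or_ne i j with rfl | hij
    · rw [if_pos rfl, Dbr_neg_right]
      ring
    · rw [if_neg hij, Dbr_zero_right, Dbr_leibniz_right, Dlq, if_neg hij, Dll]
      ring
  · rw [if_neg hjk, Dbr_zero_right]
    rcases eq_or_ne i k with rfl | hik
    · rw [if_pos rfl, Dbr_neg_right, Dbr_leibniz_right, Dlq, if_neg hjk, Dll]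
      ring
    · rw [if_neg hik, Dbr_zero_right]
      ring


lemma eq_zero_of_self_neg {x : Kn (σn n)} (h : x = -x) : x = 0 := by
  have h2 : (2 : Kn (σn n)) * x = 0 := by linear_combination h
  rcases mul_eq_zero.mp h2 with h' | h'
  · exact absurd h' two_ne_zero
  · exact h'

lemma Jac_self12 (f h : Kn (σn n)) : Jac n f f h = 0 :=
  eq_zero_of_self_neg (Jac_swap f f h)

lemma Jac_self23 (f g : Kn (σn n)) : Jac n f g g = 0 :=
  eq_zero_of_self_neg (Jac_swap23 f g g)

lemma J3 (i : Fin n) {j k : Fin n} (hjk : j ≠ k) : Jac n (Lv i) (Qv j) (Qv k) = 0 := by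
  rw [Jac, Dqq hjk, Dql, Dlq,
    Dbr_leibniz_right (Lv i) (Qv j * Qv k) (Hv j k), DlH i hjk,
    Dbr_leibniz_right (Lv i) (Qv j) (Qv k), Dlq, Dlq]
  rcases eq_or_ne i j with rfl | hij
  · rw [if_neg hjk, if_pos rfl, if_neg hjk, Dbr_zero_right,
      Dbr_leibniz_right (Qv k) (Lv i) (Qv i), Dqq (Ne.symm hjk), Dql, if_neg hjk,
      Hv_antisymm hjk]
    ring
  · simp only [if_neg hij]
    rw [Dbr_zero_right]
    rcases eq_or_ne i k with rfl | hik
    · rw [if_pos rfl, if_pos rfl, Dbr_neg_right, Dbr_leibniz_right (Qv j) (Lv i) (Qv i), Dqq hjk, Dql, if_neg hij]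
      ring
    · simp only [if_neg hik]
      rw [Dbr_zero_right]
      ring

lemma J4 {i j k : Fin n} (hij : i ≠ j) (hjk : j ≠ k) (hik : i ≠ k) :
    Jac n (Qv i) (Qv j) (Qv k) = 0 := by
  rw [Jac, Dqq hjk, Dqq (Ne.symm hik), Dqq hij,
    Dbr_leibniz_right (Qv i) (Qv j * Qv k) (Hv j k), DqH hjk hij hik,
    Dbr_leibniz_right (Qv i) (Qv j) (Qv k), Dqq hij, Dqq hik,
    Dbr_leibniz_right (Qv j) (Qv k * Qv i) (Hv k i),
    DqH (Ne.symm hik) hjk (Ne.symm hij),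
    Dbr_leibniz_right (Qv j) (Qv k) (Qv i), Dqq (Ne.symm hij), Dqq hjk,
    Dbr_leibniz_right (Qv k) (Qv i * Qv j) (Hv i j),
    DqH hij (Ne.symm hik) (Ne.symm hjk),
    Dbr_leibniz_right (Qv k) (Qv i) (Qv j), Dqq (Ne.symm hik), Dqq (Ne.symm hjk),
    Hv_antisymm hij, Hv_antisymm hjk, Hv_antisymm hik]
  ring


lemma Jac_self13 (f g : Kn (σn n)) : Jac n f g f = 0 := by
  rw [Jac_cyc]; exact Jac_self23 g f

lemma J3' (i j k : Fin n) : Jac n (Lv i) (Qv j) (Qv k) = 0 := by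
  rcases eq_or_ne j k with rfl | hjk
  · exact Jac_self23 _ _
  · exact J3 i hjk

lemma J4' (i j k : Fin n) : Jac n (Qv i) (Qv j) (Qv k) = 0 := by
  rcases eq_or_ne i j with rfl | hij
  · exact Jac_self12 _ _
  rcases eq_or_ne j k with rfl | hjk
  · exact Jac_self23 _ _
  rcases eq_or_ne i k with rfl | hik
  · exact Jac_self13 _ _
  exact J4 hij hjk hik

lemma Jac_gen (a b c : σn n) :
    Jac n (aM _ (X a)) (aM _ (X b)) (aM _ (X c)) = 0 := by
  rcases a with u | i | i
  · cases u; exact JX1 _ _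
  · rcases b with u | j | j
    · cases u
      show Jac n (Lv i) (Xv n) _ = 0
      rw [Jac_swap (Xv n) (Lv i), JX1, neg_zero]
    · rcases c with u | k | k
      · cases u
        show Jac n (Lv i) (Lv j) (Xv n) = 0
        rw [Jac_cyc, Jac_cyc, JX1]
      · exact J1 i j k
      · exact J2 i j k
    · rcases c with u | k | k
      · cases u
        show Jac n (Lv i) (Qv j) (Xv n) = 0
        rw [Jac_cyc, Jac_cyc, JX1]
      · show Jac n (Lv i) (Qv j) (Lv k) = 0
        rw [Jac_swap23 (Lv i) (Lv k) (Qv j), J2, neg_zero]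
      · exact J3' i j k
  · rcases b with u | j | j
    · cases u
      show Jac n (Qv i) (Xv n) _ = 0
      rw [Jac_swap (Xv n) (Qv i), JX1, neg_zero]
    · rcases c with u | k | k
      · cases u
        show Jac n (Qv i) (Lv j) (Xv n) = 0
        rw [Jac_cyc, Jac_cyc, JX1]
      · show Jac n (Qv i) (Lv j) (Lv k) = 0
        rw [Jac_cyc, J2]
      · show Jac n (Qv i) (Lv j) (Qv k) = 0
        rw [Jac_swap (Lv j) (Qv i) (Qv k), J3', neg_zero]
    · rcases c with u | k | k
      · cases u
        show Jac n (Qv i) (Qv j) (Xv n) = 0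
        rw [Jac_cyc, Jac_cyc, JX1]
      · show Jac n (Qv i) (Qv j) (Lv k) = 0
        rw [← Jac_cyc (Lv k) (Qv i) (Qv j), J3']
      · exact J4' i j k


lemma Jac_zero (f g h : Kn (σn n)) : Jac n f g h = 0 := by
  have T1 : ∀ (b c : σn n) (f : Kn (σn n)), Jac n f (aM _ (X b)) (aM _ (X c)) = 0 := by
    intro b c
    exact derivation_ext (fun u v => Jac_add1 u v _ _) (fun u v => Jac_mul1 u v _ _)
      (fun cc => Jac_C1 cc _ _) (fun s => Jac_gen s b c)
  have T2 : ∀ (c : σn n) (g f : Kn (σn n)), Jac n f g (aM _ (X c)) = 0 := by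
    intro c g f
    have hext := derivation_ext (d := fun g => Jac n g (aM _ (X c)) f)
      (fun u v => Jac_add1 u v _ _) (fun u v => Jac_mul1 u v _ _)
      (fun cc => Jac_C1 cc _ _)
      (fun s => by
        show Jac n (aM _ (X s)) (aM _ (X c)) f = 0
        rw [← Jac_cyc f (aM _ (X s)) (aM _ (X c))]
        exact T1 s c f)
    rw [Jac_cyc]
    exact hext g
  have hext := derivation_ext (d := fun h => Jac n h f g)
    (fun u v => Jac_add1 u v _ _) (fun u v => Jac_mul1 u v _ _)
    (fun cc => Jac_C1 cc _ _)
    (fun s => by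
      show Jac n (aM _ (X s)) f g = 0
      rw [Jac_cyc]
      exact T2 s g f)
  rw [Jac_cyc, Jac_cyc]
  exact hext h

end

/-- There exists a bracket `D` on the field of rational functions in `x, λ_i, q_i`
satisfying the Jacobi identity, with `D x f = 0`, `D λ_i λ_j = 0`,
`D λ_i q_j = δ_{ij} λ_i q_j`, and for `i ≠ j`,
`D q_i q_j = q_i q_j λ_i λ_j (λ_i + λ_j) / ((λ_i - x λ_j)(λ_j - x λ_i)(λ_i - λ_j))`:
the canonical Poisson structure on the lowest-dimensional symplectic leaves of the
moduli space of flat connections on a one-holed torus. -/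
theorem exists_ruijsenaars_poisson_bracket (n : ℕ) (hn : 1 ≤ n) :
    ∃ D : RatFd n → RatFd n → RatFd n,
      IsBracket (RatFd n) D
      ∧ (∀ f g h : RatFd n, D f (D g h) + D g (D h f) + D h (D f g) = 0)
      ∧ (∀ f : RatFd n, D (xVar n) f = 0)
      ∧ (∀ i j, D (lVar n i) (lVar n j) = 0)
      ∧ (∀ i j, D (lVar n i) (qVar n j) = if i = j then lVar n i * qVar n j else 0)
      ∧ (∀ i j, i ≠ j → D (qVar n i) (qVar n j)
          = qVar n i * qVar n j * lVar n i * lVar n j * (lVar n i + lVar n j)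
            / ((lVar n i - xVar n * lVar n j) * (lVar n j - xVar n * lVar n i)
                * (lVar n i - lVar n j))) := by
  refine ⟨Dbr n, ⟨Dbr_add_left, Dbr_smul_left, Dbr_antisymm, Dbr_leibniz⟩,
    fun f g h => Jac_zero f g h, fun f => Dx_left f, Dll, Dlq, fun i j hij => ?_⟩
  show Dbr n (Qv i) (Qv j) = _
  rw [Dqq hij, Hv]
  show _ = Qv i * Qv j * Lv i * Lv j * (Lv i + Lv j) /
    ((Lv i - Xv n * Lv j) * (Lv j - Xv n * Lv i) * (Lv i - Lv j))
  ring
end
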